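/- Monotonicity of information gain in the absolute log Bayes factor: Fix π₀ ∈ (0,1), let σ be the logistic function, and define π(u) = σ(logit(π₀) + u) and F(u) = D(π(u)‖π₀), where D is the Bernoulli KL divergence. Then F is differentiable with F'(u) = u·π(u)·(1−π(u)); consequently F is strictly decreasing on (−∞,0) and strictly increasing on (0,∞), with F(0) = 0. -/

import Mathlib

/-! The partial derivative of `D(p‖q)` in `p` is `logit p - logit q`, and `logit ∘ σ = id`, so by
the chain rule `F'(u) = (logit π(u) - logit π₀) · σ' = u · π(u) (1 - π(u))`, which has the sign
of `u`. -/

noncomputable def logit (p : ℝ) : ℝ := Real.log (p / (1 - p))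
noncomputable def logistic (x : ℝ) : ℝ := 1 / (1 + Real.exp (-x))
noncomputable def bernKL (p q : ℝ) : ℝ :=
  p * Real.log (p / q) + (1 - p) * Real.log ((1 - p) / (1 - q))

-- Closed before the theorem: under `open Real`, its binder `π` would parse as `Real.pi`.
section

open Real Set

lemma logistic_eq_sigmoid : logistic = sigmoid :=
  funext fun x => by rw [logistic, sigmoid_def, one_div]

lemma logistic_pos (x : ℝ) : 0 < logistic x :=
  logistic_eq_sigmoid ▸ sigmoid_pos x

lemma logistic_lt_one (x : ℝ) : logistic x < 1 :=
  logistic_eq_sigmoid ▸ sigmoid_lt_one x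

lemma hasDerivAt_logistic (x : ℝ) :
    HasDerivAt logistic (logistic x * (1 - logistic x)) x :=
  logistic_eq_sigmoid ▸ hasDerivAt_sigmoid x

lemma logit_logistic (x : ℝ) : logit (logistic x) = x := by
  rw [logistic_eq_sigmoid, logit, ← sigmoid_neg, ← sigmoid_mul_rexp_neg,
    div_mul_cancel_left₀ (sigmoid_pos x).ne', exp_neg, inv_inv, log_exp]

lemma logistic_logit {p : ℝ} (hp₀ : 0 < p) (hp₁ : p < 1) : logistic (logit p) = p := by
  obtain ⟨x, rfl⟩ : p ∈ range logistic := logistic_eq_sigmoid ▸ range_sigmoid ▸ ⟨hp₀, hp₁⟩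
  rw [logit_logistic]

lemma logit_eq_log_sub_log {p : ℝ} (hp₀ : p ≠ 0) (hp₁ : p ≠ 1) :
    logit p = log p - log (1 - p) :=
  log_div hp₀ (sub_ne_zero.2 hp₁.symm)

lemma mul_log_div (x : ℝ) {c : ℝ} (hc : c ≠ 0) : x * log (x / c) = x * log x - x * log c := by
  rcases eq_or_ne x 0 with rfl | hx
  · simp
  · rw [log_div hx hc, mul_sub]

lemma bernKL_self (q : ℝ) : bernKL q q = 0 := by
  simp [bernKL]

lemma bernKL_eq {q : ℝ} (hq₀ : q ≠ 0) (hq₁ : q ≠ 1) (p : ℝ) :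
    bernKL p q = p * log p + (1 - p) * log (1 - p) - (p * log q + (1 - p) * log (1 - q)) := by
  rw [bernKL, mul_log_div p hq₀, mul_log_div (1 - p) (sub_ne_zero.2 hq₁.symm)]
  ring

lemma hasDerivAt_bernKL_left {p q : ℝ} (hp₀ : p ≠ 0) (hp₁ : p ≠ 1) (hq₀ : q ≠ 0) (hq₁ : q ≠ 1) :
    HasDerivAt (fun x => bernKL x q) (logit p - logit q) p := by
  have hid := hasDerivAt_id p
  have h := ((hasDerivAt_mul_log hp₀).add
    ((hasDerivAt_mul_log (sub_ne_zero.2 hp₁.symm)).comp p (hid.const_sub 1))).sub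
    ((hid.mul_const (log q)).add ((hid.const_sub 1).mul_const (log (1 - q))))
  rw [funext (bernKL_eq hq₀ hq₁)]
  refine h.congr_deriv ?_
  rw [logit_eq_log_sub_log hp₀ hp₁, logit_eq_log_sub_log hq₀ hq₁]
  ring

end

theorem stmt_7 (π₀ : ℝ) (h0 : 0 < π₀) (h1 : π₀ < 1) :
    let π : ℝ → ℝ := fun u => logistic (logit π₀ + u)
    let F : ℝ → ℝ := fun u => bernKL (π u) π₀
    (∀ u : ℝ, HasDerivAt F (u * π u * (1 - π u)) u) ∧
    StrictAntiOn F (Set.Iio (0 : ℝ)) ∧ StrictMonoOn F (Set.Ioi (0 : ℝ)) ∧ F 0 = 0 := by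
  intro π F
  have hπ (u : ℝ) : HasDerivAt π (π u * (1 - π u)) u :=
    (hasDerivAt_logistic _).comp_const_add _ _
  have hF (u : ℝ) : HasDerivAt F (u * π u * (1 - π u)) u := by
    have hlogit : logit (π u) = logit π₀ + u := logit_logistic _
    refine ((hasDerivAt_bernKL_left (p := π u) (logistic_pos _).ne' (logistic_lt_one _).ne
      h0.ne' h1.ne).comp u (hπ u)).congr_deriv ?_
    rw [hlogit]
    ring
  have hπ_var (u : ℝ) : 0 < π u * (1 - π u) :=
    mul_pos (logistic_pos _) (sub_pos.2 (logistic_lt_one _))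
  refine ⟨hF, ?_, ?_, ?_⟩
  · refine strictAntiOn_of_hasDerivWithinAt_neg (convex_Iio 0)
      (HasDerivAt.continuousOn fun u _ => hF u)
      (fun u _ => (hF u).hasDerivWithinAt) fun u hu => ?_
    rw [interior_Iio] at hu
    rw [mul_assoc]
    exact mul_neg_of_neg_of_pos hu (hπ_var u)
  · refine strictMonoOn_of_hasDerivWithinAt_pos (convex_Ioi 0)
      (HasDerivAt.continuousOn fun u _ => hF u)
      (fun u _ => (hF u).hasDerivWithinAt) fun u hu => ?_
    rw [interior_Ioi] at hu
    rw [mul_assoc]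
    exact mul_pos hu (hπ_var u)
  · show bernKL (logistic (logit π₀ + 0)) π₀ = 0
    rw [add_zero, logistic_logit h0 h1, bernKL_self]
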